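/- arXiv:0812.5089 — 5 statements merged into one kernel-verified Lean document; each statement's English description precedes it below -/
import Mathlib

section
/- For any finite set of pairwise non-overlapping convex bodies in the plane, there exists at least one body that can be translated arbitrarily far away without intersecting the interiors of the others (i.e., every finite planar arrangement of convex bodies can be disassembled one by one by translations). -/
/-!
Say `A` is below `B` if some point of `A`, pushed upwards, lands in `B`. For disjoint open
convex sets a separating line shows that then every point of `A` lies below every point of `B`
on the same vertical line; hence the relation is asymmetric and, since three pairwise
overlapping intervals share a point (Helly in dimension one), has no 3-cycles. Adding bodies in
order of the left endpoints of their projections to the `x`-axis, an induction shows that some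
interior has nothing above it, and that body can be moved upwards forever.
-/

open Function

theorem Finset.exists_mem_forall_not_rel {α β : Type*} [DecidableEq α] [LinearOrder β]
    (r : α → α → Prop) (f : α → β) (irrefl : ∀ a, ¬ r a a) (asymm : ∀ a b, r a b → ¬ r b a)
    (no_three_cycle : ∀ a b c, r a b → r b c → ¬ r c a)
    (chord : ∀ u x w, r u x → r x w → f u ≤ f x → f w ≤ f x → u ≠ w → r u w ∨ r w u)
    (s : Finset α) (hs : s.Nonempty) : ∃ i ∈ s, ∀ j ∈ s, ¬ r i j := by
  induction s using Finset.induction_on_max_value f with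
  | empty => exact absurd hs Finset.not_nonempty_empty
  | insert x s hxs hmax ih =>
    obtain rfl | hs := s.eq_empty_or_nonempty
    · exact ⟨x, by simp, by simpa using irrefl x⟩
    obtain ⟨i, his, hi⟩ := ih hs
    by_cases hix : r i x
    · -- `x` maximizes `f`, so `chord` makes anything above `x` comparable with `i`.
      refine ⟨x, Finset.mem_insert_self x s, fun w hw hxw => ?_⟩
      obtain rfl | hw := Finset.mem_insert.1 hw
      · exact irrefl _ hxw
      have hiw : i ≠ w := by rintro rfl; exact asymm _ _ hix hxw
      rcases chord i x w hix hxw (hmax i his) (hmax w hw) hiw with h | h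
      · exact hi w hw h
      · exact no_three_cycle i x w hix hxw h
    · refine ⟨i, Finset.mem_insert_of_mem his, fun j hj => ?_⟩
      obtain rfl | hj := Finset.mem_insert.1 hj
      · exact hix
      · exact hi j hj

theorem Set.OrdConnected.inter_nonempty_of_csInf_le {S X T : Set ℝ} (hS : S.OrdConnected)
    (hT : T.OrdConnected) (hX : IsOpen X) (hXb : BddBelow X)
    (hSinf : sInf S ≤ sInf X) (hTinf : sInf T ≤ sInf X)
    (hSX : (S ∩ X).Nonempty) (hXT : (X ∩ T).Nonempty) : (S ∩ T).Nonempty := by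
  obtain ⟨p, hpS, hpX⟩ := hSX
  obtain ⟨q, hqX, hqT⟩ := hXT
  have lt_of_mem : ∀ {y}, y ∈ X → sInf X < y := fun {y} hy => by
    obtain ⟨ε, hε, hball⟩ := Metric.isOpen_iff.1 hX _ hy
    have : y - ε / 2 ∈ X := hball (by rw [Metric.mem_ball, Real.dist_eq, abs_of_neg] <;> linarith)
    linarith [csInf_le hXb this]
  rcases le_total p q with hpq | hqp
  · obtain ⟨z, hzT, hzp⟩ := exists_lt_of_csInf_lt ⟨q, hqT⟩ (hTinf.trans_lt (lt_of_mem hpX))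
    exact ⟨p, hpS, hT.uIcc_subset hzT hqT (Set.mem_uIcc_of_le hzp.le hpq)⟩
  · obtain ⟨z, hzS, hzq⟩ := exists_lt_of_csInf_lt ⟨p, hpS⟩ (hSinf.trans_lt (lt_of_mem hqX))
    exact ⟨q, hS.uIcc_subset hzS hpS (Set.mem_uIcc_of_le hzq.le hqp), hqT⟩

theorem Convex.inter_inter_nonempty {S T U : Set ℝ} (hS : Convex ℝ S) (hT : Convex ℝ T)
    (hU : Convex ℝ U) (hST : (S ∩ T).Nonempty) (hTU : (T ∩ U).Nonempty)
    (hUS : (U ∩ S).Nonempty) : (S ∩ T ∩ U).Nonempty := by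
  have helly := Convex.helly_theorem (𝕜 := ℝ) (F := ![S, T, U]) (s := Finset.univ) (by simp)
    (by intro i _; fin_cases i <;> assumption)
    (by
      intro I _ hI
      rw [Module.finrank_self] at hI
      obtain ⟨x, y, hxy, rfl⟩ := Finset.card_eq_two.1 hI
      fin_cases x <;> fin_cases y <;> simp_all [Set.inter_comm])
  obtain ⟨x, hxS, hxT, hxU⟩ : ∃ x ∈ S, x ∈ T ∧ x ∈ U := by
    simpa [Fin.forall_fin_succ] using helly
  exact ⟨x, ⟨hxS, hxT⟩, hxU⟩

section Translation

variable {E : Type*} [NormedAddCommGroup E] [NormedSpace ℝ E]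

def IsBelow (v : E) (A B : Set E) : Prop :=
  ∃ a ∈ A, ∃ t : ℝ, 0 < t ∧ a + t • v ∈ B

variable {v : E} {A B : Set E}

theorem IsBelow.pos_of_add_smul_mem (hAB : IsBelow v A B) (hAo : IsOpen A) (hAc : Convex ℝ A)
    (hBo : IsOpen B) (hBc : Convex ℝ B) (hd : Disjoint A B) {a : E} {t : ℝ} (ha : a ∈ A)
    (hb : a + t • v ∈ B) : 0 < t := by
  -- a functional separating `A` from `B` must increase along `v`
  obtain ⟨f, c, hfA, hfB⟩ := geometric_hahn_banach_open_open hAc hAo hBc hBo hd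
  obtain ⟨a₀, ha₀, t₀, ht₀, hb₀⟩ := hAB
  have hf₀ := (hfA a₀ ha₀).trans (hfB _ hb₀)
  have hf := (hfA a ha).trans (hfB _ hb)
  simp only [map_add, map_smul, smul_eq_mul] at hf₀ hf
  have hfv : 0 < f v := pos_of_mul_pos_right (by linarith) ht₀.le
  exact pos_of_mul_pos_left (by linarith) hfv.le

theorem IsBelow.not_isBelow (hAB : IsBelow v A B) (hAo : IsOpen A) (hAc : Convex ℝ A)
    (hBo : IsOpen B) (hBc : Convex ℝ B) (hd : Disjoint A B) : ¬ IsBelow v B A := by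
  rintro ⟨b, hb, t, ht, hbt⟩
  have := hAB.pos_of_add_smul_mem hAo hAc hBo hBc hd (t := -t) hbt (by simpa using hb)
  linarith

theorem disjoint_image_add_smul_of_not_isBelow (hd : Disjoint A B) (hAB : ¬ IsBelow v A B)
    {t : ℝ} (ht : 0 ≤ t) : Disjoint ((· + t • v) '' A) B := by
  rw [Set.disjoint_left]
  rintro _ ⟨a, ha, rfl⟩
  obtain rfl | ht := ht.eq_or_lt
  · simpa using Set.disjoint_left.1 hd ha
  · exact fun hb => hAB ⟨a, ha, t, ht, hb⟩

end Translation

local notation "ℝ²" => EuclideanSpace ℝ (Fin 2)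
local notation "e₁" => EuclideanSpace.single (1 : Fin 2) (1 : ℝ)
local notation "π₀" => EuclideanSpace.proj (𝕜 := ℝ) (0 : Fin 2)

theorem EuclideanSpace.eq_add_smul_single_one_of_apply_zero_eq {a b : ℝ²} (h : a 0 = b 0) :
    b = a + (b 1 - a 1) • e₁ := by
  ext i
  fin_cases i <;> simp [h]

section Plane

variable {A B C : Set ℝ²}

theorem IsBelow.inter_image_proj_nonempty (h : IsBelow e₁ A B) :
    (π₀ '' A ∩ π₀ '' B).Nonempty := by
  obtain ⟨a, ha, t, -, hb⟩ := h
  exact ⟨a 0, ⟨a, ha, by simp⟩, ⟨_, hb, by simp⟩⟩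

theorem isBelow_or_isBelow_of_apply_zero_eq (hd : Disjoint A B) {a b : ℝ²} (ha : a ∈ A)
    (hb : b ∈ B) (h : a 0 = b 0) : IsBelow e₁ A B ∨ IsBelow e₁ B A := by
  have hab := EuclideanSpace.eq_add_smul_single_one_of_apply_zero_eq h
  have hba := EuclideanSpace.eq_add_smul_single_one_of_apply_zero_eq h.symm
  rcases lt_trichotomy (a 1) (b 1) with hlt | heq | hgt
  · exact .inl ⟨a, ha, b 1 - a 1, sub_pos.2 hlt, hab ▸ hb⟩
  · rw [hab, heq, sub_self, zero_smul, add_zero] at hb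
    exact absurd hb (Set.disjoint_left.1 hd ha)
  · exact .inr ⟨b, hb, a 1 - b 1, sub_pos.2 hgt, hba ▸ ha⟩

theorem IsBelow.not_isBelow_of_isBelow (hAB : IsBelow e₁ A B) (hBC : IsBelow e₁ B C)
    (hAo : IsOpen A) (hAc : Convex ℝ A) (hBo : IsOpen B) (hBc : Convex ℝ B)
    (hCo : IsOpen C) (hCc : Convex ℝ C) (hdAB : Disjoint A B) (hdBC : Disjoint B C)
    (hdCA : Disjoint C A) : ¬ IsBelow e₁ C A := by
  intro hCA
  obtain ⟨s, ⟨⟨p, hp, rfl⟩, ⟨q, hq, hqp⟩⟩, ⟨r, hr, hrp⟩⟩ := Convex.inter_inter_nonempty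
    (hAc.linear_image (EuclideanSpace.projₗ 0)) (hBc.linear_image (EuclideanSpace.projₗ 0))
    (hCc.linear_image (EuclideanSpace.projₗ 0)) hAB.inter_image_proj_nonempty
    hBC.inter_image_proj_nonempty hCA.inter_image_proj_nonempty
  simp only [PiLp.projₗ_apply] at hqp hrp
  have hpq := hAB.pos_of_add_smul_mem hAo hAc hBo hBc hdAB hp
    (EuclideanSpace.eq_add_smul_single_one_of_apply_zero_eq hqp.symm ▸ hq)
  have hqr := hBC.pos_of_add_smul_mem hBo hBc hCo hCc hdBC hq
    (EuclideanSpace.eq_add_smul_single_one_of_apply_zero_eq (hqp.trans hrp.symm) ▸ hr)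
  have hrp := hCA.pos_of_add_smul_mem hCo hCc hAo hAc hdCA hr
    (EuclideanSpace.eq_add_smul_single_one_of_apply_zero_eq hrp ▸ hp)
  linarith

theorem exists_forall_not_isBelow {ι : Type*} [Fintype ι] [Nonempty ι] (U : ι → Set ℝ²)
    (hUo : ∀ i, IsOpen (U i)) (hUc : ∀ i, Convex ℝ (U i))
    (hUb : ∀ i, Bornology.IsBounded (U i)) (hd : Pairwise (Disjoint on U)) :
    ∃ i, ∀ j, j ≠ i → ¬ IsBelow e₁ (U i) (U j) := by
  classical
  have hopen (i : ι) : IsOpen (π₀ '' U i) :=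
    ContinuousLinearMap.isOpenMap π₀ (fun y => ⟨EuclideanSpace.single 0 y, by simp⟩) _ (hUo i)
  have hconv (i : ι) : Convex ℝ (π₀ '' U i) := (hUc i).linear_image (EuclideanSpace.projₗ 0)
  have hbdd (i : ι) : BddBelow (π₀ '' U i) :=
    ((ContinuousLinearMap.lipschitz π₀).isBounded_image (hUb i)).bddBelow
  obtain ⟨i, -, hi⟩ := Finset.univ.exists_mem_forall_not_rel
    (fun i j => i ≠ j ∧ IsBelow e₁ (U i) (U j)) (fun i => sInf (π₀ '' U i))
    (fun i h => h.1 rfl)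
    (fun i j ⟨hij, h⟩ ⟨_, h'⟩ => h.not_isBelow (hUo i) (hUc i) (hUo j) (hUc j) (hd hij) h')
    (fun i j k ⟨hij, h⟩ ⟨hjk, h'⟩ ⟨hki, h''⟩ => h.not_isBelow_of_isBelow h' (hUo i) (hUc i)
      (hUo j) (hUc j) (hUo k) (hUc k) (hd hij) (hd hjk) (hd hki) h'')
    (fun u x w ⟨_, hux⟩ ⟨_, hxw⟩ hu hw huw => by
      obtain ⟨s, ⟨a, ha, rfl⟩, ⟨b, hb, hba⟩⟩ := (hconv u).ordConnected.inter_nonempty_of_csInf_le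
        (hconv w).ordConnected (hopen x) (hbdd x) hu hw hux.inter_image_proj_nonempty
        hxw.inter_image_proj_nonempty
      simp only [PiLp.proj_apply] at hba
      exact (isBelow_or_isBelow_of_apply_zero_eq (hd huw) ha hb hba.symm).imp
        (⟨huw, ·⟩) (⟨Ne.symm huw, ·⟩))
    Finset.univ_nonempty
  exact ⟨i, fun j hji h => hi j (Finset.mem_univ j) ⟨hji.symm, h⟩⟩

end Plane

theorem planar_convex_bodies_disassemble_general
    {m : ℕ} (hm : 0 < m) (K : Fin m → Set (EuclideanSpace ℝ (Fin 2)))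
    (hcomp : ∀ i, IsCompact (K i)) (hconv : ∀ i, Convex ℝ (K i))
    (hdisj : ∀ i j, i ≠ j → Disjoint (interior (K i)) (interior (K j))) :
    ∃ i : Fin m, ∃ v : EuclideanSpace ℝ (Fin 2), v ≠ 0 ∧
      ∀ t : ℝ, 0 ≤ t → ∀ j, j ≠ i →
        Disjoint (interior ((fun x => x + t • v) '' K i)) (interior (K j)) := by
  have : Nonempty (Fin m) := ⟨⟨0, hm⟩⟩
  obtain ⟨i, hi⟩ := exists_forall_not_isBelow (fun i => interior (K i))
    (fun _ => isOpen_interior) (fun i => (hconv i).interior)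
    (fun i => (hcomp i).isBounded.subset interior_subset) hdisj
  refine ⟨i, e₁, by simp, fun t ht j hji => ?_⟩
  have hint : interior ((· + t • e₁) '' K i) = (· + t • e₁) '' interior (K i) := by
    simpa using ((Homeomorph.addRight (t • e₁)).image_interior (K i)).symm
  rw [hint]
  exact disjoint_image_add_smul_of_not_isBelow (hdisj i j hji.symm) (hi j hji) ht

/-- Every finite planar arrangement of pairwise non-overlapping convex bodies can be
disassembled: some body can be translated arbitrarily far without meeting the
interiors of the others. -/
theorem planar_convex_bodies_disassemble
    {m : ℕ} (hm : 0 < m) (K : Fin m → Set (EuclideanSpace ℝ (Fin 2)))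
    (hcomp : ∀ i, IsCompact (K i)) (hconv : ∀ i, Convex ℝ (K i))
    (hint : ∀ i, (interior (K i)).Nonempty)
    (hdisj : ∀ i j, i ≠ j → Disjoint (interior (K i)) (interior (K j))) :
    ∃ i : Fin m, ∃ v : EuclideanSpace ℝ (Fin 2), v ≠ 0 ∧
      ∀ t : ℝ, 0 ≤ t → ∀ j, j ≠ i →
        Disjoint (interior ((fun x => x + t • v) '' K i)) (interior (K j)) :=
  planar_convex_bodies_disassemble_general hm K hcomp hconv hdisj
end

section
/- Consider a convex polygon evolving under constant normal speeds of its supporting lines. The polygon degenerates in finite time if and only if either (1) there exist two edges with antiparallel normals whose supporting-line distance vanishes in finite time, or (2) there exist three edges whose supporting lines form a triangle that degenerates (its area tends to 0) in finite time. -/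
/-!
Nonzero normals make the interior of the polygon the intersection of the open half-planes, so
degeneration at time `T` says that these open half-planes have empty intersection; by Helly's
theorem in the plane, three of them already do. If no antiparallel slab among them has collapsed,
their normals admit no direction of recession `v ≠ 0` (i.e. `⟪v, nᵢ⟫ ≤ 0` for all three):
otherwise one first meets the constraints whose normals are orthogonal to `v`, which is a
one-dimensional problem solvable exactly because no slab has collapsed, and then moves far along
`v`. A slab that has collapsed by time `T` collapses exactly at some time in `[0, T]`, as its
width is affine in `t` and positive at `0`.
-/

open RealInnerProductSpace

open Filter Module Set

open scoped EuclideanSpace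

theorem Finset.Nonempty.exists_eq_or_eq_or_eq_of_card_le_three {ι : Type*} {I : Finset ι}
    (hI : I.Nonempty) (h3 : I.card ≤ 3) : ∃ a b c, ∀ i ∈ I, i = a ∨ i = b ∨ i = c := by
  classical
  obtain h | h | h : I.card = 1 ∨ I.card = 2 ∨ I.card = 3 := by have := hI.card_pos; omega
  · obtain ⟨a, rfl⟩ := Finset.card_eq_one.1 h
    exact ⟨a, a, a, by simp⟩
  · obtain ⟨a, b, -, rfl⟩ := Finset.card_eq_two.1 h
    exact ⟨a, b, b, by simp⟩
  · obtain ⟨a, b, c, -, -, -, rfl⟩ := Finset.card_eq_three.1 h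
    exact ⟨a, b, c, by simp⟩

theorem Convex.exists_inter_inter_eq_empty {ι 𝕜 E : Type*} [Finite ι] [Field 𝕜] [LinearOrder 𝕜]
    [IsStrictOrderedRing 𝕜] [AddCommGroup E] [Module 𝕜 E] [FiniteDimensional 𝕜 E]
    (hE : finrank 𝕜 E ≤ 2) {F : ι → Set E} (hF : ∀ i, Convex 𝕜 (F i)) (h : ⋂ i, F i = ∅) :
    ∃ a b c, F a ∩ F b ∩ F c = ∅ := by
  classical
  have := Fintype.ofFinite ι
  by_contra! htriple
  suffices (⋂ i ∈ Finset.univ, F i).Nonempty by simp [h] at this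
  refine Convex.helly_theorem' (fun i _ => hF i) fun I _ hI => ?_
  rcases I.eq_empty_or_nonempty with rfl | hne
  · simp
  obtain ⟨a, b, c, habc⟩ := hne.exists_eq_or_eq_or_eq_of_card_le_three (by omega)
  refine (htriple a b c).mono fun x hx => mem_iInter₂.2 fun i hi => ?_
  rcases habc i hi with rfl | rfl | rfl
  exacts [hx.1.1, hx.1.2, hx.2]

section

variable {E : Type*} [NormedAddCommGroup E] [InnerProductSpace ℝ E]

theorem interior_setOf_inner_le {n : E} (hn : n ≠ 0) (b : ℝ) :
    interior {x : E | ⟪x, n⟫ ≤ b} = {x | ⟪x, n⟫ < b} := by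
  have hf : innerSL ℝ n ≠ 0 := by
    rw [← norm_ne_zero_iff, innerSL_apply_norm]; exact norm_ne_zero_iff.2 hn
  have hle : {x : E | ⟪x, n⟫ ≤ b} = innerSL ℝ n ⁻¹' Iic b := by ext; simp [real_inner_comm]
  have hlt : {x : E | ⟪x, n⟫ < b} = innerSL ℝ n ⁻¹' Iio b := by ext; simp [real_inner_comm]
  rw [hle, hlt, ← ((innerSL ℝ n).isOpenMap_of_ne_zero hf).preimage_interior_eq_interior_preimage
    (innerSL ℝ n).continuous, interior_Iic]

theorem interior_iInter_setOf_inner_le {ι : Type*} [Finite ι] {n : ι → E} (hn : ∀ i, n i ≠ 0)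
    (b : ι → ℝ) :
    interior (⋂ i, {x : E | ⟪x, n i⟫ ≤ b i}) = ⋂ i, {x | ⟪x, n i⟫ < b i} :=
  (interior_iInter_of_finite _).trans (iInter_congr fun i => interior_setOf_inner_le (hn i) (b i))

variable [Fact (finrank ℝ E = 2)]

theorem eq_or_eq_neg_of_inner_eq_zero {u v w : E} (hv : v ≠ 0) (hu : ‖u‖ = 1) (hw : ‖w‖ = 1)
    (huv : ⟪v, u⟫ = 0) (hwv : ⟪v, w⟫ = 0) : u = w ∨ u = -w := by
  have hw0 : w ≠ 0 := norm_ne_zero_iff.1 (by rw [hw]; exact one_ne_zero)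
  obtain ⟨r, rfl⟩ := Submodule.mem_span_singleton.1
    (Submodule.mem_span_singleton_of_inner_eq_zero_of_inner_eq_zero hv hw0 huv hwv)
  rw [norm_smul, hw, mul_one, Real.norm_eq_abs] at hu
  rcases abs_eq (zero_le_one' ℝ) |>.1 hu with rfl | rfl
  · exact .inl (one_smul ℝ w)
  · exact .inr (neg_one_smul ℝ w)

variable {ι : Type*} [Finite ι] {n : ι → E} {b : ι → ℝ}

theorem exists_forall_inner_lt_of_inner_eq_zero (hn : ∀ i, ‖n i‖ = 1) {v : E} (hv : v ≠ 0)
    (hpair : ∀ i j, n j = -n i → 0 < b i + b j) :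
    ∃ x, ∀ i, ⟪v, n i⟫ = 0 → ⟪x, n i⟫ < b i := by
  by_cases h : ∃ i₀, ⟪v, n i₀⟫ = 0
  swap
  · exact ⟨0, fun i hi => (h ⟨i, hi⟩).elim⟩
  obtain ⟨i₀, hi₀⟩ := h
  -- the normals orthogonal to `v` are `± n i₀`, so only a one-dimensional problem is left
  obtain ⟨μ, hlow, hup⟩ := Set.Finite.exists_between'
    ((toFinite {i | n i = -n i₀}).image fun i => -b i) ((toFinite {i | n i = n i₀}).image b)
    (by
      rintro _ ⟨i, hi : n i = -n i₀, rfl⟩ _ ⟨j, hj : n j = n i₀, rfl⟩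
      have := hpair i j (by rw [hi, hj, neg_neg])
      linarith)
  have hnorm : ⟪n i₀, n i₀⟫ = 1 := by rw [real_inner_self_eq_norm_sq, hn, one_pow]
  refine ⟨μ • n i₀, fun i hi => ?_⟩
  rcases eq_or_eq_neg_of_inner_eq_zero hv (hn i) (hn i₀) hi hi₀ with h | h
  · rw [h, real_inner_smul_left, hnorm, mul_one]
    exact hup _ ⟨i, h, rfl⟩
  · rw [h, inner_neg_right, real_inner_smul_left, hnorm, mul_one]
    linarith [hlow _ ⟨i, h, rfl⟩]

theorem exists_forall_inner_lt_of_recession (hn : ∀ i, ‖n i‖ = 1) {v : E} (hv : v ≠ 0)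
    (hvn : ∀ i, ⟪v, n i⟫ ≤ 0) (hpair : ∀ i j, n j = -n i → 0 < b i + b j) :
    ∃ x, ∀ i, ⟪x, n i⟫ < b i := by
  obtain ⟨x₀, hx₀⟩ := exists_forall_inner_lt_of_inner_eq_zero hn hv hpair
  have hray : ∀ i, ∀ᶠ t : ℝ in atTop, ⟪x₀ + t • v, n i⟫ < b i := by
    intro i
    simp only [inner_add_left, real_inner_smul_left]
    rcases (hvn i).lt_or_eq with hlt | heq
    · exact (tendsto_atBot_add_const_left _ _
        (tendsto_id.atTop_mul_const_of_neg hlt)).eventually_lt_atBot (b i)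
    · exact Eventually.of_forall fun t => by rw [heq, mul_zero, add_zero]; exact hx₀ i heq
  obtain ⟨t, ht⟩ := (eventually_all.2 hray).exists
  exact ⟨x₀ + t • v, ht⟩

theorem exists_antiparallel_or_triangle_of_iInter_eq_empty
    (hn : ∀ i, ‖n i‖ = 1) (h : ⋂ i, {x : E | ⟪x, n i⟫ < b i} = ∅) :
    (∃ i j, n j = -n i ∧ b i + b j ≤ 0) ∨
      ∃ e₁ e₂ e₃, {v : E | ⟪v, n e₁⟫ ≤ 0 ∧ ⟪v, n e₂⟫ ≤ 0 ∧ ⟪v, n e₃⟫ ≤ 0} = {0} ∧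
        {x : E | ⟪x, n e₁⟫ < b e₁ ∧ ⟪x, n e₂⟫ < b e₂ ∧ ⟪x, n e₃⟫ < b e₃} = ∅ := by
  have : FiniteDimensional ℝ E := .of_fact_finrank_eq_two
  obtain ⟨e₁, e₂, e₃, he⟩ :=
    Convex.exists_inter_inter_eq_empty (𝕜 := ℝ) (Fact.out : finrank ℝ E = 2).le
    (fun i => convex_halfSpace_lt
      ⟨fun x y => inner_add_left x y _, fun r x => real_inner_smul_left x _ r⟩ (b i)) h
  have htri : {x : E | ⟪x, n e₁⟫ < b e₁ ∧ ⟪x, n e₂⟫ < b e₂ ∧ ⟪x, n e₃⟫ < b e₃} = ∅ := by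
    rwa [ofPred_and, ofPred_and, ← inter_assoc]
  by_cases hpair : ∃ i j, n j = -n i ∧ b i + b j ≤ 0
  · exact .inl hpair
  push Not at hpair
  refine .inr ⟨e₁, e₂, e₃, eq_singleton_iff_unique_mem.2 ⟨by simp, fun v hv => ?_⟩, htri⟩
  by_contra hv0
  let e : Fin 3 → ι := ![e₁, e₂, e₃]
  obtain ⟨x, hx⟩ := exists_forall_inner_lt_of_recession (n := n ∘ e) (b := b ∘ e)
    (fun k => hn (e k)) hv0 (by simpa [Fin.forall_fin_succ, e] using hv)
    (fun k l => hpair (e k) (e l))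
  exact htri.subset ⟨hx 0, hx 1, hx 2⟩

end

theorem exists_nonneg_add_mul_eq_zero {α β T : ℝ} (hT : 0 ≤ T) (h₀ : 0 < α)
    (hT' : α + β * T ≤ 0) : ∃ t, 0 ≤ t ∧ α + β * t = 0 := by
  have hβ : β < 0 := by nlinarith
  exact ⟨-α / β, div_nonneg_of_nonpos (by linarith) hβ.le, by rw [mul_div_cancel₀ _ hβ.ne]; ring⟩

/-- Degeneration criterion for an evolving convex polygon: the polygon degenerates in
finite time iff either two edges with antiparallel normals have supporting-line
distance vanishing in finite time, or three edges whose supporting lines form a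
triangle have that triangle degenerating in finite time. -/
theorem polygon_degeneration_criterion
    {ι : Type*} [Fintype ι]
    (n : ι → EuclideanSpace ℝ (Fin 2)) (c s : ι → ℝ)
    (hunit : ∀ i, ‖n i‖ = 1)
    -- at time 0 we have a genuine convex polygon
    (hpoly : (interior (⋂ i, {x : EuclideanSpace ℝ (Fin 2) |
        ⟪x, n i⟫ ≤ c i + s i * 0})).Nonempty) :
    (∃ t : ℝ, 0 ≤ t ∧
        interior (⋂ i, {x : EuclideanSpace ℝ (Fin 2) | ⟪x, n i⟫ ≤ c i + s i * t}) = ∅) ↔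
      ((∃ e₁ e₂ : ι, n e₂ = -n e₁ ∧
          ∃ t : ℝ, 0 ≤ t ∧ (c e₁ + s e₁ * t) + (c e₂ + s e₂ * t) = 0) ∨
       (∃ e₁ e₂ e₃ : ι,
          -- the three supporting lines bound a triangle
          {v : EuclideanSpace ℝ (Fin 2) |
              ⟪v, n e₁⟫ ≤ 0 ∧ ⟪v, n e₂⟫ ≤ 0 ∧ ⟪v, n e₃⟫ ≤ 0} = {0} ∧
          -- and that triangle degenerates (loses its interior) in finite time
          ∃ t : ℝ, 0 ≤ t ∧
            interior {x : EuclideanSpace ℝ (Fin 2) |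
                ⟪x, n e₁⟫ ≤ c e₁ + s e₁ * t ∧ ⟪x, n e₂⟫ ≤ c e₂ + s e₂ * t ∧
                ⟪x, n e₃⟫ ≤ c e₃ + s e₃ * t} = ∅)) := by
  have hn i : n i ≠ 0 := norm_ne_zero_iff.1 (by rw [hunit]; exact one_ne_zero)
  have hpolygon (t : ℝ) := interior_iInter_setOf_inner_le hn fun i => c i + s i * t
  have htriangle (e₁ e₂ e₃ : ι) (t : ℝ) :
      interior {x : EuclideanSpace ℝ (Fin 2) | ⟪x, n e₁⟫ ≤ c e₁ + s e₁ * t ∧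
        ⟪x, n e₂⟫ ≤ c e₂ + s e₂ * t ∧ ⟪x, n e₃⟫ ≤ c e₃ + s e₃ * t} =
      {x | ⟪x, n e₁⟫ < c e₁ + s e₁ * t ∧ ⟪x, n e₂⟫ < c e₂ + s e₂ * t ∧
        ⟪x, n e₃⟫ < c e₃ + s e₃ * t} := by
    simp only [ofPred_and, interior_inter, interior_setOf_inner_le (hn _)]
  simp only [hpolygon, htriangle] at hpoly ⊢
  constructor
  · rintro ⟨T, hT, hempty⟩
    rcases exists_antiparallel_or_triangle_of_iInter_eq_empty hunit hempty with
      ⟨i, j, hij, hcollapse⟩ | ⟨e₁, e₂, e₃, hcone, htri⟩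
    · obtain ⟨x, hx⟩ := hpoly
      have hi := mem_iInter.1 hx i
      have hj := mem_iInter.1 hx j
      simp only [mem_ofPred_eq, hij, inner_neg_right] at hi hj
      obtain ⟨t, ht, hzero⟩ := exists_nonneg_add_mul_eq_zero (α := c i + c j)
        (β := s i + s j) hT (by linarith) (by linarith)
      exact .inl ⟨i, j, hij, t, ht, by linear_combination hzero⟩
    · exact .inr ⟨e₁, e₂, e₃, hcone, T, hT, htri⟩
  · rintro (⟨e₁, e₂, hanti, t, ht, hsum⟩ | ⟨e₁, e₂, e₃, -, t, ht, htri⟩)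
    · refine ⟨t, ht, eq_empty_of_forall_notMem fun x hx => ?_⟩
      have h₁ := mem_iInter.1 hx e₁
      have h₂ := mem_iInter.1 hx e₂
      simp only [mem_ofPred_eq, hanti, inner_neg_right] at h₁ h₂
      linarith
    · exact ⟨t, ht, subset_empty_iff.1 fun x hx =>
        htri.subset ⟨mem_iInter.1 hx e₁, mem_iInter.1 hx e₂, mem_iInter.1 hx e₃⟩⟩
end

section
/- In the tetrahedral interlocking assembly, consider regular tetrahedra of type A (upper edge along the x-axis, lower edge along the y-axis) and type B (rotated 90°), with unit upper edges, centered at integer points (m,n) colored by parity: A-tetrahedra at points with m+n even, B at points with m+n odd. Then the interiors of any two distinct tetrahedra in this family are disjoint. -/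
noncomputable section

/-- Half-height of the regular tetrahedra with unit horizontal edges. -/
def tetH : ℝ := 1 / (2 * Real.sqrt 2)

/-- A-tetrahedron centered at the origin: upper unit edge along the x-axis, lower
unit edge along the y-axis. -/
def tetA : Set (Fin 3 → ℝ) :=
  convexHull ℝ {![1 / 2, 0, tetH], ![-(1 / 2), 0, tetH],
                 ![0, 1 / 2, -tetH], ![0, -(1 / 2), -tetH]}

/-- B-tetrahedron: the A-tetrahedron rotated by 90° about the vertical axis. -/
def tetB : Set (Fin 3 → ℝ) :=
  convexHull ℝ {![0, 1 / 2, tetH], ![0, -(1 / 2), tetH],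
                 ![1 / 2, 0, -tetH], ![-(1 / 2), 0, -tetH]}

/-- The tetrahedron of the interlocking family centered at the integer point `(m, n)`:
an A-tetrahedron if `m + n` is even, a B-tetrahedron if `m + n` is odd. -/
def tetFam (z : ℤ × ℤ) : Set (Fin 3 → ℝ) :=
  (fun x => x + ![(z.1 : ℝ), (z.2 : ℝ), 0]) ''
    (if (z.1 + z.2) % 2 = 0 then tetA else tetB)

namespace TetAux

open Set

/-- The linear functional with coefficient vector `a`. -/
def lf (a : Fin 3 → ℝ) : (Fin 3 → ℝ) →L[ℝ] ℝ :=
  a 0 • ContinuousLinearMap.proj 0 + a 1 • ContinuousLinearMap.proj 1 +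
    a 2 • ContinuousLinearMap.proj 2

lemma lf_apply (a p : Fin 3 → ℝ) : lf a p = a 0 * p 0 + a 1 * p 1 + a 2 * p 2 := by
  simp [lf]

lemma lf_surj (a : Fin 3 → ℝ) (ha : a 0 ≠ 0 ∨ a 1 ≠ 0 ∨ a 2 ≠ 0) :
    Function.Surjective (lf a) := by
  have hS : 0 < a 0 ^ 2 + a 1 ^ 2 + a 2 ^ 2 := by
    rcases ha with h | h | h <;> positivity
  intro r
  refine ⟨(r / (a 0 ^ 2 + a 1 ^ 2 + a 2 ^ 2)) • a, ?_⟩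
  rw [lf_apply]
  simp only [Pi.smul_apply, smul_eq_mul]
  field_simp

/-- The closed halfspace with coefficients `a` and bound `c`. -/
def H (a : Fin 3 → ℝ) (c : ℝ) : Set (Fin 3 → ℝ) :=
  {p | a 0 * p 0 + a 1 * p 1 + a 2 * p 2 ≤ c}

lemma convex_H (a : Fin 3 → ℝ) (c : ℝ) : Convex ℝ (H a c) := by
  have : H a c = lf a ⁻¹' Iic c := by ext p; simp [H, lf_apply]
  rw [this]
  exact (convex_Iic c).linear_preimage (lf a).toLinearMap

lemma interior_H (a : Fin 3 → ℝ) (ha : a 0 ≠ 0 ∨ a 1 ≠ 0 ∨ a 2 ≠ 0) (c : ℝ) :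
    interior (H a c) = {p | a 0 * p 0 + a 1 * p 1 + a 2 * p 2 < c} := by
  have h1 : H a c = lf a ⁻¹' Iic c := by ext p; simp [H, lf_apply]
  rw [h1, (lf a).interior_preimage (lf_surj a ha), interior_Iic]
  ext p; simp [lf_apply]

/-- `2√2 = 1/tetH`. -/
def s : ℝ := 2 * Real.sqrt 2

lemma s_pos : 0 < s := by
  have : (0:ℝ) < Real.sqrt 2 := Real.sqrt_pos.mpr (by norm_num)
  unfold s; linarith

lemma s_mul_tetH : s * tetH = 1 := by
  unfold s tetH
  field_simp

/-- The A-tetrahedron as intersection of four halfspaces. -/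
def CA : Set (Fin 3 → ℝ) :=
  H ![4, 0, -s] 1 ∩ H ![-4, 0, -s] 1 ∩ H ![0, 4, s] 1 ∩ H ![0, -4, s] 1

def CB : Set (Fin 3 → ℝ) :=
  H ![0, 4, -s] 1 ∩ H ![0, -4, -s] 1 ∩ H ![4, 0, s] 1 ∩ H ![-4, 0, s] 1

lemma tetA_subset_CA : tetA ⊆ CA := by
  have hst := s_mul_tetH
  apply convexHull_min _ (((((convex_H _ _).inter (convex_H _ _)).inter
    (convex_H _ _)).inter (convex_H _ _)))
  intro p hp
  simp only [Set.mem_insert_iff, Set.mem_singleton_iff] at hp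
  rcases hp with h | h | h | h <;> subst h <;>
    simp only [CA, H, Set.mem_inter_iff, Set.mem_setOf_eq, Matrix.cons_val_zero,
      Matrix.cons_val_one, Matrix.head_cons, Matrix.cons_val_two, Matrix.tail_cons] <;>
    refine ⟨⟨⟨?_, ?_⟩, ?_⟩, ?_⟩ <;> nlinarith [s_pos, s_mul_tetH]

lemma tetB_subset_CB : tetB ⊆ CB := by
  have hst := s_mul_tetH
  apply convexHull_min _ (((((convex_H _ _).inter (convex_H _ _)).inter
    (convex_H _ _)).inter (convex_H _ _)))
  intro p hp
  simp only [Set.mem_insert_iff, Set.mem_singleton_iff] at hp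
  rcases hp with h | h | h | h <;> subst h <;>
    simp only [CB, H, Set.mem_inter_iff, Set.mem_setOf_eq, Matrix.cons_val_zero,
      Matrix.cons_val_one, Matrix.head_cons, Matrix.cons_val_two, Matrix.tail_cons] <;>
    refine ⟨⟨⟨?_, ?_⟩, ?_⟩, ?_⟩ <;> nlinarith [s_pos, s_mul_tetH]

/-- Strict inequalities satisfied by interior points of the A-tetrahedron. -/
lemma interior_tetA_subset :
    interior tetA ⊆ {p : Fin 3 → ℝ | 4 * p 0 - s * p 2 < 1 ∧ -4 * p 0 - s * p 2 < 1 ∧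
      4 * p 1 + s * p 2 < 1 ∧ -4 * p 1 + s * p 2 < 1} := by
  intro p hp
  have h := interior_mono tetA_subset_CA hp
  rw [CA, interior_inter, interior_inter, interior_inter] at h
  rw [interior_H _ (by left; norm_num), interior_H _ (by left; norm_num),
    interior_H _ (by right; left; norm_num), interior_H _ (by right; left; norm_num)] at h
  obtain ⟨⟨⟨h1, h2⟩, h3⟩, h4⟩ := h
  simp only [Set.mem_setOf_eq, Matrix.cons_val_zero, Matrix.cons_val_one, Matrix.head_cons,
    Matrix.cons_val_two, Matrix.tail_cons] at h1 h2 h3 h4 ⊢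
  refine ⟨by linarith, by linarith, by linarith, by linarith⟩

lemma interior_tetB_subset :
    interior tetB ⊆ {p : Fin 3 → ℝ | 4 * p 1 - s * p 2 < 1 ∧ -4 * p 1 - s * p 2 < 1 ∧
      4 * p 0 + s * p 2 < 1 ∧ -4 * p 0 + s * p 2 < 1} := by
  intro p hp
  have h := interior_mono tetB_subset_CB hp
  rw [CB, interior_inter, interior_inter, interior_inter] at h
  rw [interior_H _ (by right; left; norm_num), interior_H _ (by right; left; norm_num),
    interior_H _ (by left; norm_num), interior_H _ (by left; norm_num)] at h
  obtain ⟨⟨⟨h1, h2⟩, h3⟩, h4⟩ := h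
  simp only [Set.mem_setOf_eq, Matrix.cons_val_zero, Matrix.cons_val_one, Matrix.head_cons,
    Matrix.cons_val_two, Matrix.tail_cons] at h1 h2 h3 h4 ⊢
  refine ⟨by linarith, by linarith, by linarith, by linarith⟩

lemma interior_image_translate (v : Fin 3 → ℝ) (S : Set (Fin 3 → ℝ)) :
    interior ((fun x => x + v) '' S) = (fun x => x + v) '' interior S := by
  exact ((Homeomorph.addRight v).image_interior S).symm

/-- Interior points of a family member satisfy the corresponding strict inequalities. -/
lemma interior_tetFam_subset (z : ℤ × ℤ) (p : Fin 3 → ℝ) (hp : p ∈ interior (tetFam z)) :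
    if (z.1 + z.2) % 2 = 0 then
      (4 * (p 0 - z.1) - s * p 2 < 1 ∧ -4 * (p 0 - z.1) - s * p 2 < 1 ∧
       4 * (p 1 - z.2) + s * p 2 < 1 ∧ -4 * (p 1 - z.2) + s * p 2 < 1)
    else
      (4 * (p 1 - z.2) - s * p 2 < 1 ∧ -4 * (p 1 - z.2) - s * p 2 < 1 ∧
       4 * (p 0 - z.1) + s * p 2 < 1 ∧ -4 * (p 0 - z.1) + s * p 2 < 1) := by
  unfold tetFam at hp
  by_cases hz : (z.1 + z.2) % 2 = 0 <;> simp only [hz, if_true, if_false, reduceIte] at hp ⊢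
  · rw [interior_image_translate] at hp
    obtain ⟨q, hq, rfl⟩ := hp
    have h := interior_tetA_subset hq
    simp only [Set.mem_setOf_eq] at h
    simp only [Pi.add_apply, Matrix.cons_val_zero, Matrix.cons_val_one, Matrix.head_cons,
      Matrix.cons_val_two, Matrix.tail_cons]
    refine ⟨by linarith [h.1], by linarith [h.2.1], by linarith [h.2.2.1], by linarith [h.2.2.2]⟩
  · rw [interior_image_translate] at hp
    obtain ⟨q, hq, rfl⟩ := hp
    have h := interior_tetB_subset hq
    simp only [Set.mem_setOf_eq] at h
    simp only [Pi.add_apply, Matrix.cons_val_zero, Matrix.cons_val_one, Matrix.head_cons,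
      Matrix.cons_val_two, Matrix.tail_cons]
    refine ⟨by linarith [h.1], by linarith [h.2.1], by linarith [h.2.2.1], by linarith [h.2.2.2]⟩

lemma int_eq_of_abs_lt_one {a b : ℤ} (h1 : (a : ℝ) - b < 1) (h2 : (b : ℝ) - a < 1) : a = b := by
  have h1' : (a : ℤ) - b < 1 := by exact_mod_cast (by push_cast; linarith : ((a - b : ℤ) : ℝ) < 1)
  have h2' : (b : ℤ) - a < 1 := by exact_mod_cast (by push_cast; linarith : ((b - a : ℤ) : ℝ) < 1)
  omega

end TetAux

open TetAux in
/-- The tetrahedra of the interlocking assembly have pairwise disjoint interiors. -/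
theorem tetrahedral_assembly_interiors_disjoint :
    ∀ z₁ z₂ : ℤ × ℤ, z₁ ≠ z₂ →
      Disjoint (interior (tetFam z₁)) (interior (tetFam z₂)) := by
  intro z₁ z₂ hne
  rw [Set.disjoint_left]
  intro p hp1 hp2
  have h1 := interior_tetFam_subset z₁ p hp1
  have h2 := interior_tetFam_subset z₂ p hp2
  by_cases e1 : (z₁.1 + z₁.2) % 2 = 0 <;> by_cases e2 : (z₂.1 + z₂.2) % 2 = 0 <;>
    simp only [e1, e2, if_true, if_false, reduceIte] at h1 h2
  · -- A-A
    obtain ⟨a1, a2, a3, a4⟩ := h1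
    obtain ⟨b1, b2, b3, b4⟩ := h2
    have hm : z₁.1 = z₂.1 := int_eq_of_abs_lt_one (by linarith) (by linarith)
    have hn : z₁.2 = z₂.2 := int_eq_of_abs_lt_one (by linarith) (by linarith)
    exact hne (Prod.ext hm hn)
  · -- A-B
    obtain ⟨a1, a2, a3, a4⟩ := h1
    obtain ⟨b1, b2, b3, b4⟩ := h2
    have hm : z₁.1 = z₂.1 := int_eq_of_abs_lt_one (by linarith) (by linarith)
    have hn : z₁.2 = z₂.2 := int_eq_of_abs_lt_one (by linarith) (by linarith)
    rw [hm, hn] at e1; exact e2 e1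
  · -- B-A
    obtain ⟨a1, a2, a3, a4⟩ := h1
    obtain ⟨b1, b2, b3, b4⟩ := h2
    have hm : z₁.1 = z₂.1 := int_eq_of_abs_lt_one (by linarith) (by linarith)
    have hn : z₁.2 = z₂.2 := int_eq_of_abs_lt_one (by linarith) (by linarith)
    rw [← hm, ← hn] at e2; exact e1 e2
  · -- B-B
    obtain ⟨a1, a2, a3, a4⟩ := h1
    obtain ⟨b1, b2, b3, b4⟩ := h2
    have hm : z₁.1 = z₂.1 := int_eq_of_abs_lt_one (by linarith) (by linarith)
    have hn : z₁.2 = z₂.2 := int_eq_of_abs_lt_one (by linarith) (by linarith)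
    exact hne (Prod.ext hm hn)

end
end

section
/- In the tetrahedral assembly above, each A-tetrahedron X is translationally locked: the four border planes through its contact faces with its four neighboring B-tetrahedra (at distance 1 to the left, right, top and bottom) have inward normals whose only common nonnegative direction is zero; equivalently, the intersection of the four corresponding affine half-spaces containing X is bounded. -/
open Matrix

noncomputable section

/-- The four neighboring B-tetrahedra of the A-tetrahedron at the origin:
right, left, top, bottom. -/
def tetNb : Fin 4 → Set (Fin 3 → ℝ) :=
  ![(fun x => x + ![(1 : ℝ), 0, 0]) '' tetB,
    (fun x => x + ![(-1 : ℝ), 0, 0]) '' tetB,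
    (fun x => x + ![(0 : ℝ), 1, 0]) '' tetB,
    (fun x => x + ![(0 : ℝ), -1, 0]) '' tetB]

/-- Inward normals of the four border planes through the contact faces of the
A-tetrahedron at the origin. -/
def tetN : Fin 4 → (Fin 3 → ℝ) :=
  ![![-(2 * tetH), 0, 1 / 2], ![2 * tetH, 0, 1 / 2],
    ![0, -(2 * tetH), -(1 / 2)], ![0, 2 * tetH, -(1 / 2)]]

/-- Points on the corresponding border planes (vertices of the contact faces). -/
def tetP : Fin 4 → (Fin 3 → ℝ) :=
  ![![0, 1 / 2, -tetH], ![0, 1 / 2, -tetH], ![1 / 2, 0, tetH], ![1 / 2, 0, tetH]]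

lemma finmk4_0 (h : 0 < 4) : (⟨0, h⟩ : Fin 4) = 0 := rfl
lemma finmk4_1 (h : 1 < 4) : (⟨1, h⟩ : Fin 4) = 1 := rfl
lemma finmk4_2 (h : 2 < 4) : (⟨2, h⟩ : Fin 4) = 2 := rfl
lemma finmk4_3 (h : 3 < 4) : (⟨3, h⟩ : Fin 4) = 3 := rfl
lemma finmk3_0 (h : 0 < 3) : (⟨0, h⟩ : Fin 3) = 0 := rfl
lemma finmk3_1 (h : 1 < 3) : (⟨1, h⟩ : Fin 3) = 1 := rfl
lemma finmk3_2 (h : 2 < 3) : (⟨2, h⟩ : Fin 3) = 2 := rfl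

lemma tetH_pos : 0 < tetH := by unfold tetH; positivity

lemma tetH_le_one : tetH ≤ 1 := by
  unfold tetH
  rw [div_le_one (by positivity)]
  nlinarith [Real.sq_sqrt (by norm_num : (2:ℝ) ≥ 0), Real.sqrt_nonneg 2]

lemma dotLinear (n : Fin 3 → ℝ) : IsLinearMap ℝ (fun x : Fin 3 → ℝ => n ⬝ᵥ x) :=
  ⟨fun x y => dotProduct_add n x y, fun c x => by simp [dotProduct_smul, smul_eq_mul]⟩

lemma convex_inner (n p : Fin 3 → ℝ) : Convex ℝ {x : Fin 3 → ℝ | 0 ≤ n ⬝ᵥ (x - p)} := by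
  have : {x : Fin 3 → ℝ | 0 ≤ n ⬝ᵥ (x - p)} = {x : Fin 3 → ℝ | n ⬝ᵥ p ≤ n ⬝ᵥ x} := by
    ext x; simp [dotProduct_sub, sub_nonneg]
  rw [this]
  exact convex_halfSpace_ge (dotLinear n) _

lemma convex_outer (n p a : Fin 3 → ℝ) :
    Convex ℝ {x : Fin 3 → ℝ | n ⬝ᵥ (x + a - p) ≤ 0} := by
  have : {x : Fin 3 → ℝ | n ⬝ᵥ (x + a - p) ≤ 0}
      = {x : Fin 3 → ℝ | n ⬝ᵥ x ≤ n ⬝ᵥ p - n ⬝ᵥ a} := by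
    ext x; simp [dotProduct_sub, dotProduct_add]; constructor <;> intro <;> linarith
  rw [this]
  exact convex_halfSpace_le (dotLinear n) _

set_option maxHeartbeats 1600000 in
/-- The A-tetrahedron at the origin is translationally locked by its four neighboring
B-tetrahedra: it lies on the inner side of each of the four border planes, each
neighbor lies on the outer side, the only translation vector admissible for all four
border planes is `0`, and equivalently the intersection of the four affine inner
half-spaces is bounded. -/
theorem tetrahedron_translationally_locked :
    (∀ i, tetA ⊆ {x : Fin 3 → ℝ | 0 ≤ tetN i ⬝ᵥ (x - tetP i)}) ∧
    (∀ i, tetNb i ⊆ {x : Fin 3 → ℝ | tetN i ⬝ᵥ (x - tetP i) ≤ 0}) ∧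
    ({v : Fin 3 → ℝ | ∀ i, 0 ≤ tetN i ⬝ᵥ v} = {0}) ∧
    Bornology.IsBounded {x : Fin 3 → ℝ | ∀ i, 0 ≤ tetN i ⬝ᵥ (x - tetP i)} := by
  have ht := tetH_pos
  have ht1 := tetH_le_one
  refine ⟨?_, ?_, ?_, ?_⟩
  · intro i
    apply convexHull_min ?_ (convex_inner (tetN i) (tetP i))
    intro v hv
    fin_cases i <;>
      simp only [Set.mem_insert_iff, Set.mem_singleton_iff] at hv <;>
      rcases hv with rfl | rfl | rfl | rfl <;>
      simp only [finmk4_0, finmk4_1, finmk4_2, finmk4_3, finmk3_0, finmk3_1, finmk3_2, Matrix.cons_val_three, tetN, tetP, Set.mem_setOf_eq, Matrix.cons_val_zero, Matrix.cons_val_one,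
        Matrix.head_cons, dotProduct, Fin.sum_univ_three, Pi.sub_apply, Matrix.cons_val_two,
        Matrix.tail_cons] <;>
      nlinarith [ht]
  · intro i
    fin_cases i <;>
      (simp only [tetNb, finmk4_0, finmk4_1, finmk4_2, finmk4_3, Matrix.cons_val_zero,
         Matrix.cons_val_one, Matrix.head_cons, Matrix.cons_val_two, Matrix.cons_val_three,
         Matrix.tail_cons]
       rintro x ⟨y, hy, rfl⟩
       refine convexHull_min ?_ (convex_outer _ _ _) hy
       intro v hv
       simp only [Set.mem_insert_iff, Set.mem_singleton_iff] at hv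
       rcases hv with rfl | rfl | rfl | rfl <;>
         simp only [finmk4_0, finmk4_1, finmk4_2, finmk4_3, finmk3_0, finmk3_1, finmk3_2,
           Matrix.cons_val_three, tetN, tetP, Set.mem_setOf_eq, Matrix.cons_val_zero,
           Matrix.cons_val_one, Matrix.head_cons, dotProduct, Fin.sum_univ_three, Pi.sub_apply,
           Pi.add_apply, Matrix.cons_val_two, Matrix.tail_cons] <;>
         nlinarith [ht])
  · ext v
    simp only [Set.mem_setOf_eq, Set.mem_singleton_iff]
    constructor
    · intro h
      have h0 := h 0
      have h1 := h 1
      have h2 := h 2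
      have h3 := h 3
      simp only [finmk4_0, finmk4_1, finmk4_2, finmk4_3, finmk3_0, finmk3_1, finmk3_2, Matrix.cons_val_three, tetN, dotProduct, Fin.sum_univ_three, Matrix.cons_val_zero,
        Matrix.cons_val_one, Matrix.head_cons, Matrix.cons_val_two, Matrix.tail_cons] at h0 h1 h2 h3
      funext j
      fin_cases j <;> simp only [finmk3_0, finmk3_1, finmk3_2, Pi.zero_apply] <;> nlinarith [ht]
    · rintro rfl
      intro i
      simp
  · apply Bornology.IsBounded.subset (Metric.isBounded_closedBall (x := (0 : Fin 3 → ℝ)) (r := 1))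
    intro x hx
    have h0 := hx 0
    have h1 := hx 1
    have h2 := hx 2
    have h3 := hx 3
    simp only [finmk4_0, finmk4_1, finmk4_2, finmk4_3, finmk3_0, finmk3_1, finmk3_2, Matrix.cons_val_three, tetN, tetP, dotProduct, Fin.sum_univ_three, Matrix.cons_val_zero,
      Matrix.cons_val_one, Matrix.head_cons, Matrix.cons_val_two, Matrix.tail_cons,
      Pi.sub_apply] at h0 h1 h2 h3
    simp only [Metric.mem_closedBall, dist_zero_right]
    rw [pi_norm_le_iff_of_nonneg (by norm_num)]
    intro j
    fin_cases j <;> simp only [finmk3_0, finmk3_1, finmk3_2] <;> rw [Real.norm_eq_abs, abs_le] <;> constructor <;> nlinarith [ht, ht1]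


end
end

section
/- Six unit vectors in R^3 given by n_k = (cos(kπ/3)·s, sin(kπ/3)·s, (−1)^k·t) for k = 0,...,5 with s, t > 0 satisfy: the only v ∈ R^3 with ⟨v, n_k⟩ ≥ 0 for all k is v = 0; hence a hexagonal-prism-like element whose six lateral faces have these inward normals is translationally locked. -/
open Matrix Real

/-! The normals come in three antipodal pairs, `n (k + 3) = - n k`, so a vector making a
nonnegative inner product with all six is orthogonal to `n 0`, `n 1`, `n 2`; these three are
linearly independent (their determinant is `3√3/2 · s² t ≠ 0`), hence the vector vanishes. -/

noncomputable def hexagonNormal (s t : ℝ) (k : ℕ) : Fin 3 → ℝ :=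
  ![cos (k * π / 3) * s, sin (k * π / 3) * s, (-1) ^ k * t]

lemma hexagonNormal_add_three (s t : ℝ) (k : ℕ) :
    hexagonNormal s t (k + 3) = -hexagonNormal s t k := by
  have hangle : ((k : ℝ) + 3) * π / 3 = k * π / 3 + π := by ring
  ext i
  fin_cases i <;> simp [hexagonNormal, hangle, cos_add_pi, sin_add_pi, pow_succ]

lemma det_hexagonNormal (s t : ℝ) :
    (Matrix.of fun k : Fin 3 => hexagonNormal s t k).det = 3 * √3 / 2 * s ^ 2 * t := by
  have hcos : cos (2 * π / 3) = -(1 / 2) := by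
    rw [show 2 * π / 3 = π - π / 3 by ring, cos_pi_sub, cos_pi_div_three]
  have hsin : sin (2 * π / 3) = √3 / 2 := by
    rw [show 2 * π / 3 = π - π / 3 by ring, sin_pi_sub, sin_pi_div_three]
  simp only [det_fin_three, hexagonNormal, of_apply, cons_val_zero, cons_val_one, cons_val_two,
    tail_cons, head_cons, Fin.val_zero, Fin.val_one, Fin.val_two, Nat.cast_zero, Nat.cast_one, Nat.cast_ofNat, zero_mul,
    zero_div, one_mul, cos_zero, sin_zero, cos_pi_div_three, sin_pi_div_three, hcos, hsin]
  ring

lemma dotProduct_eq_zero_of_nonneg_of_nonneg_neg {ι R : Type*} [Fintype ι]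
    [CommRing R] [PartialOrder R] [IsOrderedRing R] {v w : ι → R}
    (h : 0 ≤ v ⬝ᵥ w) (hneg : 0 ≤ v ⬝ᵥ -w) : v ⬝ᵥ w = 0 := by
  rw [dotProduct_neg, neg_nonneg] at hneg
  exact le_antisymm hneg h

/-- For `s, t > 0`, the six vectors `n_k = (cos(kπ/3)·s, sin(kπ/3)·s, (−1)^k·t)`
(inward normals of the alternately tilted lateral faces over a regular hexagonal
middle section) admit no nonzero common direction: the only `v` with
`⟪v, n_k⟫ ≥ 0` for all `k` is `0`; hence such a hexagon-based element is
translationally locked. -/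
theorem hexagon_normal_configuration_locked
    (s t : ℝ) (hs : 0 < s) (ht : 0 < t)
    (n : Fin 6 → Fin 3 → ℝ)
    (hn : ∀ k : Fin 6, n k =
      ![Real.cos (k * Real.pi / 3) * s, Real.sin (k * Real.pi / 3) * s,
        (-1 : ℝ) ^ (k : ℕ) * t]) :
    ∀ v : Fin 3 → ℝ, (∀ k, 0 ≤ v ⬝ᵥ n k) → v = 0 := by
  intro v hv
  have hnormal (k : Fin 6) : n k = hexagonNormal s t k := hn k
  have horth (k : Fin 3) : v ⬝ᵥ hexagonNormal s t k = 0 := by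
    have hk : 0 ≤ v ⬝ᵥ hexagonNormal s t k := hnormal (k.castAdd 3) ▸ hv (k.castAdd 3)
    have hk3 : 0 ≤ v ⬝ᵥ hexagonNormal s t (k + 3) := hnormal (k.addNat 3) ▸ hv (k.addNat 3)
    rw [hexagonNormal_add_three] at hk3
    exact dotProduct_eq_zero_of_nonneg_of_nonneg_neg hk hk3
  have hdet : (Matrix.of fun k : Fin 3 => hexagonNormal s t k).det ≠ 0 := by
    rw [det_hexagonNormal]
    positivity
  refine eq_zero_of_mulVec_eq_zero hdet (funext fun k => ?_)
  simpa [mulVec, dotProduct_comm] using horth k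
end
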